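/- arXiv:2407.10355 — 6 statements merged into one kernel-verified Lean document; each statement's English description precedes it below -/
import Mathlib

section
/- For a word w over Σ and any word x: if x is not a subword of w then the quotient ↓(w)/x is empty; and if x is a subword of w, writing w = w₁w₂ with w₁ the shortest prefix of w containing x as a subword, then ↓(w)/x = ↓(w₂). -/
def dcl {α : Type*} (L : Set (List α)) : Set (List α) :=
  {x | ∃ y ∈ L, x.Sublist y}

def quot {α : Type*} (L : Set (List α)) (u : List α) : Set (List α) :=
  {w | u ++ w ∈ L}

theorem quot_dcl_word {α : Type*} (w x : List α) :
    (¬ x.Sublist w → quot (dcl {w}) x = ∅) ∧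
    (∀ w₁ w₂ : List α, w = w₁ ++ w₂ → x.Sublist w₁ →
      (∀ p : List α, p <+: w → x.Sublist p → w₁.length ≤ p.length) →
      quot (dcl {w}) x = dcl {w₂}) := by
  constructor
  · intro hx
    ext v
    simp only [quot, dcl, Set.mem_setOf_eq, Set.mem_singleton_iff, Set.mem_empty_iff_false,
      iff_false]
    rintro ⟨y, rfl, hs⟩
    exact hx ((List.sublist_append_left x v).trans hs)
  · rintro w₁ w₂ rfl hx hmin
    ext v
    simp only [quot, dcl, Set.mem_setOf_eq, Set.mem_singleton_iff, exists_eq_left]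
    constructor
    · intro hs
      obtain ⟨r₁, r₂, heq, h₁, h₂⟩ := List.append_sublist_iff.mp hs
      have hpre : r₁ <+: w₁ ++ w₂ := ⟨r₂, heq.symm⟩
      have hlen : w₁.length ≤ r₁.length := hmin r₁ hpre h₁
      have hsuf : r₂ <:+ w₂ := by
        have h2 : r₂ <:+ w₁ ++ w₂ := ⟨r₁, heq.symm⟩
        refine List.suffix_of_suffix_length_le h2 (List.suffix_append w₁ w₂) ?_
        have := congrArg List.length heq
        simp only [List.length_append] at this
        omega
      exact h₂.trans hsuf.sublist
    · intro hv
      exact List.Sublist.append hx hv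
end

section
/- A word x satisfies x·x ∈ ↓(V_n³) if and only if x is a subword of some conjugate of V_n, where V_n = a₁⋯a_n has pairwise distinct letters. -/
namespace List

variable {α : Type*}

theorem Nodup.idxOf_lt_idxOf_of_append_sublist [DecidableEq α] {l u w : List α} (hl : l.Nodup)
    (h : u ++ w <+ l) {a b : α} (ha : a ∈ u) (hb : b ∈ w) : l.idxOf a < l.idxOf b := by
  obtain ⟨l₁, l₂, rfl, hu, hw⟩ := append_sublist_iff.mp h
  have ha₁ : a ∈ l₁ := hu.subset ha
  have hb₁ : b ∉ l₁ := fun hb₁ => disjoint_of_nodup_append hl hb₁ (hw.subset hb)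
  rw [idxOf_append, idxOf_append, if_pos ha₁, if_neg hb₁]
  exact (idxOf_lt_length_of_mem ha₁).trans_le (Nat.le_add_left _ _)

theorem Nodup.eq_nil_or_eq_nil_or_eq_nil_of_cyclic_sublist {l M C R : List α} (hl : l.Nodup)
    (hMC : M ++ C <+ l) (hCR : C ++ R <+ l) (hRM : R ++ M <+ l) :
    M = [] ∨ C = [] ∨ R = [] := by
  classical
  rcases M with _ | ⟨m, M⟩; · simp
  rcases C with _ | ⟨c, C⟩; · simp
  rcases R with _ | ⟨r, R⟩; · simp
  have hmc := hl.idxOf_lt_idxOf_of_append_sublist hMC mem_cons_self mem_cons_self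
  have hcr := hl.idxOf_lt_idxOf_of_append_sublist hCR mem_cons_self mem_cons_self
  have hrm := hl.idxOf_lt_idxOf_of_append_sublist hRM mem_cons_self mem_cons_self
  omega

def IsSublistOfConj (x l : List α) : Prop :=
  ∃ v v' : List α, l = v ++ v' ∧ x <+ v' ++ v

theorem IsSublistOfConj.of_sublist {x l : List α} (h : x <+ l) : IsSublistOfConj x l :=
  ⟨l, [], (append_nil l).symm, h⟩

theorem IsSublistOfConj.of_append_sublist {u w l : List α} (h : u ++ w <+ l) :
    IsSublistOfConj (w ++ u) l := by
  obtain ⟨v, v', rfl, hu, hw⟩ := append_sublist_iff.mp h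
  exact ⟨v, v', rfl, hw.append hu⟩

theorem IsSublistOfConj.append_self_sublist_cube {x l : List α} (h : IsSublistOfConj x l) :
    x ++ x <+ l ++ l ++ l := by
  obtain ⟨v, v', rfl, hx⟩ := h
  have hinfix : (v' ++ v) ++ (v' ++ v) <:+: (v ++ v') ++ (v ++ v') ++ (v ++ v') :=
    ⟨v, v', by simp⟩
  exact (hx.append hx).trans hinfix.sublist

theorem Nodup.isSublistOfConj_of_append_self_eq {x a b c l : List α} (hl : l.Nodup)
    (hx : x ++ x = a ++ b ++ c) (ha : a <+ l) (hb : b <+ l) (hc : c <+ l) :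
    IsSublistOfConj x l := by
  rw [append_assoc, append_eq_append_iff] at hx
  obtain ⟨a', rfl, -⟩ | ⟨r, rfl, hbc⟩ := hx
  · exact .of_sublist ((sublist_append_left _ _).trans ha)
  rw [append_eq_append_iff] at hbc
  obtain ⟨f, rfl, rfl⟩ | ⟨d, rfl, hd⟩ := hbc
  · exact .of_sublist ((sublist_append_right _ _).trans hc)
  rw [append_eq_append_iff] at hd
  obtain ⟨e, rfl, -⟩ | ⟨e, rfl, rfl⟩ := hd
  · exact .of_append_sublist ((sublist_append_left _ _).trans (by simpa using hb))
  rcases hl.eq_nil_or_eq_nil_or_eq_nil_of_cyclic_sublist ha hc hb with rfl | rfl | rfl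
  · exact .of_sublist (by simpa using hc)
  · exact .of_append_sublist (by simpa using hb)
  · exact .of_sublist (by simpa using ha)

theorem Nodup.append_self_sublist_cube_iff {x l : List α} (hl : l.Nodup) :
    x ++ x <+ l ++ l ++ l ↔ IsSublistOfConj x l := by
  refine ⟨fun h => ?_, IsSublistOfConj.append_self_sublist_cube⟩
  obtain ⟨ab, c, hx, hab, hc⟩ := sublist_append_iff.mp h
  obtain ⟨a, b, rfl, ha, hb⟩ := sublist_append_iff.mp hab
  exact hl.isSublistOfConj_of_append_self_eq hx ha hb hc

end List

/-- `x² ∈ ↓(V³)` iff `x` is a subword of a conjugate of `V`, for `V` with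
pairwise distinct letters. -/
theorem sqrt_dcl_cube_iff_conjugate {α : Type*} (V : List α) (hV : V.Nodup)
    (x : List α) :
    (x ++ x) ∈ dcl {V ++ V ++ V} ↔
      ∃ v v' : List α, V = v ++ v' ∧ x.Sublist (v' ++ v) := by
  simp only [dcl, Set.mem_ofPred_eq, Set.mem_singleton_iff, exists_eq_left]
  exact hV.append_self_sublist_cube_iff
end

section
/- If a word w of length n+2 contains two letters each occurring exactly once in w, and w' is w with those two letters deleted, then √{↓(w)} = √{↓(w')}, i.e. for every x, x·x ≼ w iff x·x ≼ w'. -/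
namespace List

variable {α : Type*} [DecidableEq α]

theorem Sublist.sublist_erase_of_notMem {l₁ l₂ : List α} {a : α} (h : l₁ <+ l₂)
    (ha : a ∉ l₁) : l₁ <+ l₂.erase a := by
  simpa only [erase_of_not_mem ha] using h.erase a

theorem notMem_of_append_self_sublist {x w : List α} {a : α} (h : x ++ x <+ w)
    (ha : w.count a ≤ 1) : a ∉ x ++ x := by
  have hcount := (h.count_le a).trans ha
  rw [count_append] at hcount
  rw [← count_eq_zero, count_append]
  omega

end List

theorem sqrt_dcl_erase_two_unique_letters_general {α : Type*} [DecidableEq α]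
    (w : List α) (a b : α) (ha : w.count a = 1) (hb : w.count b = 1) :
    ∀ x : List α, (x ++ x).Sublist w ↔ (x ++ x).Sublist ((w.erase a).erase b) := by
  intro x
  constructor
  · intro h
    have ha_notMem := List.notMem_of_append_self_sublist h ha.le
    have hb_notMem := List.notMem_of_append_self_sublist h hb.le
    exact (h.sublist_erase_of_notMem ha_notMem).sublist_erase_of_notMem hb_notMem
  · intro h
    exact h.trans ((List.erase_sublist ..).trans (List.erase_sublist ..))

theorem sqrt_dcl_erase_two_unique_letters {α : Type*} [DecidableEq α]
    (w : List α) (a b : α) (ha : w.count a = 1) (hb : w.count b = 1) (hab : a ≠ b) :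
    ∀ x : List α, (x ++ x).Sublist w ↔ (x ++ x).Sublist ((w.erase a).erase b) :=
  sqrt_dcl_erase_two_unique_letters_general w a b ha hb
end

section
/- Let L and K be downward closed languages over Σ, with K nonempty, let a ∈ Σ, and let ρ(L) denote the substitution of a by K in L. Then for any letter b ≠ a: ρ(L)/b = ρ(L/b) ∪ (K/b)·ρ(L/a), and ρ(L)/a = (K/a)·ρ(L/a). -/
def DownClosed {α : Type*} (L : Set (List α)) : Prop :=
  ∀ ⦃x y : List α⦄, x ∈ L → y.Sublist x → y ∈ L

/-- Concatenation of languages. -/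
def cat {α : Type*} (X Y : Set (List α)) : Set (List α) :=
  Set.image2 (· ++ ·) X Y

/-- Substitution of the single letter `a` by the language `K`, on a word. -/
def subst1 {α : Type*} [DecidableEq α] (a : α) (K : Set (List α)) :
    List α → Set (List α)
  | [] => {[]}
  | b :: w => if b = a then cat K (subst1 a K w) else cat {[b]} (subst1 a K w)

/-- Substitution of `a` by `K`, lifted to languages. -/
def rho {α : Type*} [DecidableEq α] (a : α) (K : Set (List α))
    (L : Set (List α)) : Set (List α) :=
  ⋃ w ∈ L, subst1 a K w

lemma mem_cat {α : Type*} {X Y : Set (List α)} {z : List α} :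
    z ∈ cat X Y ↔ ∃ x ∈ X, ∃ y ∈ Y, x ++ y = z := by
  simp [cat, Set.mem_image2]

lemma mem_rho {α : Type*} [DecidableEq α] {a : α} {K L : Set (List α)} {z : List α} :
    z ∈ rho a K L ↔ ∃ w ∈ L, z ∈ subst1 a K w := by
  simp [rho]

lemma lem1 {α : Type*} [DecidableEq α] {a b : α} (hba : b ≠ a) {K : Set (List α)} :
    ∀ w z : List α, (b :: z) ∈ subst1 a K w →
      (∃ w', (b :: w').Sublist w ∧ z ∈ subst1 a K w') ∨
      (∃ w', (a :: w').Sublist w ∧ z ∈ cat (quot K [b]) (subst1 a K w'))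
  | [], z, h => by simp [subst1] at h
  | c :: w, z, h => by
    by_cases hc : c = a
    · subst hc
      simp only [subst1, eq_self_iff_true, if_true] at h
      rw [mem_cat] at h
      obtain ⟨k, hk, s, hs, hks⟩ := h
      match k, hks with
      | [], hks =>
        simp only [List.nil_append] at hks
        subst hks
        rcases lem1 hba w z hs with ⟨w', hsub, hz⟩ | ⟨w', hsub, hz⟩
        · exact Or.inl ⟨w', hsub.cons c, hz⟩
        · exact Or.inr ⟨w', hsub.cons c, hz⟩
      | d :: k', hks =>
        simp only [List.cons_append, List.cons.injEq] at hks
        obtain ⟨rfl, rfl⟩ := hks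
        refine Or.inr ⟨w, List.Sublist.refl _, mem_cat.2 ⟨k', ?_, s, hs, rfl⟩⟩
        exact hk
    · simp only [subst1, if_neg hc] at h
      rw [mem_cat] at h
      obtain ⟨k, hk, s, hs, hks⟩ := h
      simp only [Set.mem_singleton_iff] at hk
      subst hk
      simp only [List.cons_append, List.nil_append, List.cons.injEq] at hks
      obtain ⟨rfl, rfl⟩ := hks
      exact Or.inl ⟨w, List.Sublist.refl _, hs⟩

lemma lem2 {α : Type*} [DecidableEq α] {a : α} {K : Set (List α)} :
    ∀ w z : List α, (a :: z) ∈ subst1 a K w →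
      ∃ w', (a :: w').Sublist w ∧ z ∈ cat (quot K [a]) (subst1 a K w')
  | [], z, h => by simp [subst1] at h
  | c :: w, z, h => by
    by_cases hc : c = a
    · subst hc
      simp only [subst1, eq_self_iff_true, if_true] at h
      rw [mem_cat] at h
      obtain ⟨k, hk, s, hs, hks⟩ := h
      match k, hks with
      | [], hks =>
        simp only [List.nil_append] at hks
        subst hks
        obtain ⟨w', hsub, hz⟩ := lem2 w z hs
        exact ⟨w', hsub.cons c, hz⟩
      | d :: k', hks =>
        simp only [List.cons_append, List.cons.injEq] at hks
        obtain ⟨rfl, rfl⟩ := hks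
        exact ⟨w, List.Sublist.refl _, mem_cat.2 ⟨k', hk, s, hs, rfl⟩⟩
    · simp only [subst1, if_neg hc] at h
      rw [mem_cat] at h
      obtain ⟨k, hk, s, hs, hks⟩ := h
      simp only [Set.mem_singleton_iff] at hk
      subst hk
      simp only [List.cons_append, List.nil_append, List.cons.injEq] at hks
      exact absurd hks.1 hc

theorem quot_subst_letter {α : Type*} [DecidableEq α]
    (L K : Set (List α)) (hL : DownClosed L) (hK : DownClosed K)
    (hKne : K.Nonempty) (a : α) :
    (∀ b : α, b ≠ a →
      quot (rho a K L) [b] =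
        rho a K (quot L [b]) ∪ cat (quot K [b]) (rho a K (quot L [a]))) ∧
    quot (rho a K L) [a] = cat (quot K [a]) (rho a K (quot L [a])) := by
  constructor
  · intro b hba
    ext z
    simp only [quot, Set.mem_setOf_eq, List.cons_append, List.nil_append, Set.mem_union]
    constructor
    · intro h
      rw [mem_rho] at h
      obtain ⟨w, hw, hz⟩ := h
      rcases lem1 hba w z hz with ⟨w', hsub, hz'⟩ | ⟨w', hsub, hz'⟩
      · exact Or.inl (mem_rho.2 ⟨w', hL hw hsub, hz'⟩)
      · rw [mem_cat] at hz'
        obtain ⟨x, hx, y, hy, hxy⟩ := hz'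
        exact Or.inr (mem_cat.2 ⟨x, hx, y, mem_rho.2 ⟨w', hL hw hsub, hy⟩, hxy⟩)
    · rintro (h | h)
      · rw [mem_rho] at h
        obtain ⟨w, hw, hz⟩ := h
        refine mem_rho.2 ⟨b :: w, hw, ?_⟩
        simp only [subst1, if_neg hba]
        exact mem_cat.2 ⟨[b], rfl, z, hz, rfl⟩
      · rw [mem_cat] at h
        obtain ⟨x, hx, y, hy, hxy⟩ := h
        rw [mem_rho] at hy
        obtain ⟨w, hw, hzw⟩ := hy
        refine mem_rho.2 ⟨a :: w, hw, ?_⟩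
        simp only [subst1, if_pos rfl]
        refine mem_cat.2 ⟨b :: x, hx, y, hzw, ?_⟩
        simp [← hxy]
  · ext z
    simp only [quot, Set.mem_setOf_eq, List.cons_append, List.nil_append]
    constructor
    · intro h
      rw [mem_rho] at h
      obtain ⟨w, hw, hz⟩ := h
      obtain ⟨w', hsub, hz'⟩ := lem2 w z hz
      rw [mem_cat] at hz'
      obtain ⟨x, hx, y, hy, hxy⟩ := hz'
      exact mem_cat.2 ⟨x, hx, y, mem_rho.2 ⟨w', hL hw hsub, hy⟩, hxy⟩
    · intro h
      rw [mem_cat] at h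
      obtain ⟨x, hx, y, hy, hxy⟩ := h
      rw [mem_rho] at hy
      obtain ⟨w, hw, hzw⟩ := hy
      refine mem_rho.2 ⟨a :: w, hw, ?_⟩
      simp only [subst1, if_pos rfl]
      refine mem_cat.2 ⟨a :: x, hx, y, hzw, ?_⟩
      simp [← hxy]
end

section
/- Every left quotient of a product of atoms is either a suffix product of it or the empty set. Concretely: if I = α₁·α₂⋯αₙ where each α_i is either {c, ε} for a letter c or B* for B ⊆ Σ, then for every word x, the language I/x is either ∅ or equal to α_j·α_{j+1}⋯αₙ for some j (possibly with a leading partially consumed atom replaced appropriately: for star atoms the atom stays, for letter atoms it becomes ε, so the result is exactly a suffix product α_j⋯αₙ). -/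
/-- An atom is either `(a + ε)` for a letter `a`, or `B*` for a set of letters `B`. -/
inductive Atom (α : Type*) where
  | letter (a : α) : Atom α
  | star (B : Set α) : Atom α

/-- The language denoted by an atom. -/
def Atom.lang {α : Type*} : Atom α → Set (List α)
  | .letter a => {[a], []}
  | .star B => {w | ∀ c ∈ w, c ∈ B}

/-- The language of a product of atoms (empty product is `{ε}`). -/
def prodLang {α : Type*} : List (Atom α) → Set (List α)
  | [] => {[]}
  | A :: I => Set.image2 (· ++ ·) A.lang (prodLang I)

/-! It suffices to take quotients one letter at a time. For a language `L ∋ ε`,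
`(L·M)/a = (L/a)·M ∪ M/a`, and the quotient of an atom `A` by a letter is `∅`, `{ε}` or `A`
itself. By induction on the product, `P/a` is `∅` or a suffix product of `P`, so in particular
`P/a ⊆ P ⊆ A·P`, and `(A·P)/a` collapses to `P/a`, `P` or `A·P` respectively. -/

section Quotient

variable {α : Type*}

lemma quot_cons (L : Set (List α)) (a : α) (x : List α) :
    quot L (a :: x) = quot (quot L [a]) x := rfl

lemma quot_image2_append_singleton {L M : Set (List α)} (hL : [] ∈ L) (a : α) :
    quot (Set.image2 (· ++ ·) L M) [a] = Set.image2 (· ++ ·) (quot L [a]) M ∪ quot M [a] := by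
  ext w
  constructor
  · rintro ⟨u, hu, v, hv, huv⟩
    cases u with
    | nil =>
      obtain rfl : v = a :: w := huv
      exact Or.inr hv
    | cons c u =>
      obtain ⟨rfl, rfl⟩ := List.cons_eq_cons.mp huv
      exact Or.inl ⟨u, hu, v, hv, rfl⟩
  · rintro (⟨u, hu, v, hv, rfl⟩ | hw)
    · exact ⟨a :: u, hu, v, hv, rfl⟩
    · exact ⟨[], hL, a :: w, hw, rfl⟩

end Quotient

namespace Atom

variable {α : Type*}

lemma nil_mem_lang (A : Atom α) : [] ∈ A.lang := by
  cases A <;> simp [Atom.lang]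

lemma quot_lang_singleton (A : Atom α) (a : α) :
    quot A.lang [a] = ∅ ∨ quot A.lang [a] = {[]} ∨ quot A.lang [a] = A.lang := by
  cases A with
  | letter b =>
    by_cases h : a = b
    · exact Or.inr (Or.inl (by ext w; simp [quot, Atom.lang, h]))
    · exact Or.inl (by ext w; simp [quot, Atom.lang, h])
  | star B =>
    by_cases h : a ∈ B
    · exact Or.inr (Or.inr (by ext w; simp [quot, Atom.lang, h]))
    · exact Or.inl (by ext w; simp [quot, Atom.lang, h])

end Atom

lemma prodLang_drop_subset {α : Type*} (I : List (Atom α)) (j : ℕ) :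
    prodLang (I.drop j) ⊆ prodLang I := by
  induction I generalizing j with
  | nil => simp
  | cons A I ih =>
    cases j with
    | zero => exact subset_rfl
    | succ j => exact fun w hw => ⟨[], A.nil_mem_lang, w, ih j hw, rfl⟩

def IsEmptyOrSuffixProduct {α : Type*} (I : List (Atom α)) (L : Set (List α)) : Prop :=
  L = ∅ ∨ ∃ j ≤ I.length, L = prodLang (I.drop j)

namespace IsEmptyOrSuffixProduct

variable {α : Type*} {I : List (Atom α)} {L : Set (List α)}

lemma prodLang_self (I : List (Atom α)) : IsEmptyOrSuffixProduct I (prodLang I) :=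
  Or.inr ⟨0, Nat.zero_le _, rfl⟩

lemma subset (h : IsEmptyOrSuffixProduct I L) : L ⊆ prodLang I := by
  rcases h with rfl | ⟨j, -, rfl⟩
  · exact Set.empty_subset _
  · exact prodLang_drop_subset I j

lemma of_drop {j : ℕ} (hj : j ≤ I.length) (h : IsEmptyOrSuffixProduct (I.drop j) L) :
    IsEmptyOrSuffixProduct I L := by
  rcases h with rfl | ⟨k, hk, rfl⟩
  · exact Or.inl rfl
  · refine Or.inr ⟨j + k, ?_, by rw [List.drop_drop, Nat.add_comm]⟩
    simp only [List.length_drop] at hk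
    omega

lemma quot_prodLang_singleton (I : List (Atom α)) (a : α) :
    IsEmptyOrSuffixProduct I (quot (prodLang I) [a]) := by
  induction I with
  | nil => exact Or.inl (by ext w; simp [quot, prodLang])
  | cons A I ih =>
    rw [prodLang, quot_image2_append_singleton A.nil_mem_lang]
    rcases A.quot_lang_singleton a with h | h | h
    · rw [h, Set.image2_empty_left, Set.empty_union]
      exact of_drop (j := 1) (by simp) ih
    · rw [h, Set.image2_singleton_left, List.nil_append_fun, Set.image_id,
        Set.union_eq_left.mpr ih.subset]
      exact of_drop (j := 1) (by simp) (prodLang_self I)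
    · rw [h]
      convert prodLang_self (A :: I) using 1
      exact Set.union_eq_left.mpr (ih.subset.trans (prodLang_drop_subset (A :: I) 1))

lemma quot (h : IsEmptyOrSuffixProduct I L) (x : List α) :
    IsEmptyOrSuffixProduct I (_root_.quot L x) := by
  induction x generalizing L with
  | nil => exact h
  | cons a x ih =>
    rw [quot_cons]
    apply ih
    rcases h with rfl | ⟨j, hj, rfl⟩
    · exact Or.inl rfl
    · exact of_drop hj (quot_prodLang_singleton _ a)

end IsEmptyOrSuffixProduct

/-- Every quotient of a product of atoms is `∅` or a suffix product. -/
theorem quot_prodLang_suffix {α : Type*} (I : List (Atom α)) (x : List α) :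
    quot (prodLang I) x = ∅ ∨
      ∃ j : ℕ, j ≤ I.length ∧ quot (prodLang I) x = prodLang (I.drop j) :=
  (IsEmptyOrSuffixProduct.prodLang_self I).quot x
end

section
/- Let V_n = a₁⋯aₙ be a word with pairwise distinct letters and define CS(V_n) = ⋃_{V_n = t·v} (t ⧢ v), the set of words obtained by cutting V_n into two parts and shuffling them. Then a word u of length n satisfies u·u ∈ ↑(V_n) if and only if u ∈ CS(V_n); moreover ↑(CS(V_n)) = √{↑(V_n)}. -/
/-!
If `V` is cut as `t ++ v` and `u` interleaves `t` and `v`, then `t` embeds in the first copy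
of `u` and `v` in the second, so `V ≼ u ++ u`. Conversely, an embedding of `V` into `x ++ x`
splits `V` as `t ++ v` with `t ≼ x` and `v ≼ x`; since the letters of `V` are distinct, `t` and
`v` are disjoint, so their two embeddings into `x` merge into a single interleaving `u ≼ x`,
i.e. a word of `CS V`. When `x` has the length of `V`, this forces `u = x`.
-/

def ucl {α : Type*} (L : Set (List α)) : Set (List α) :=
  {x | ∃ y ∈ L, y.Sublist x}

/-- `IsShuffle t v u` holds iff `u` is an interleaving of `t` and `v`. -/
inductive IsShuffle {α : Type*} : List α → List α → List α → Prop
  | nil : IsShuffle [] [] []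
  | left {t v u : List α} (a : α) : IsShuffle t v u → IsShuffle (a :: t) v (a :: u)
  | right {t v u : List α} (a : α) : IsShuffle t v u → IsShuffle t (a :: v) (a :: u)

/-- `CS w`: the words obtained from `w` by one "cut and shuffle" move. -/
def CS {α : Type*} (w : List α) : Set (List α) :=
  {u | ∃ t v : List α, w = t ++ v ∧ IsShuffle t v u}

namespace IsShuffle

variable {α : Type*} {t v u : List α}

theorem sublist_left (h : IsShuffle t v u) : t.Sublist u := by
  induction h with
  | nil => exact .slnil
  | left a _ ih => exact ih.cons_cons a
  | right a _ ih => exact ih.cons a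

theorem sublist_right (h : IsShuffle t v u) : v.Sublist u := by
  induction h with
  | nil => exact .slnil
  | left a _ ih => exact ih.cons a
  | right a _ ih => exact ih.cons_cons a

theorem length_eq (h : IsShuffle t v u) : u.length = t.length + v.length := by
  induction h with
  | nil => rfl
  | left a _ ih => simp only [List.length_cons, ih]; omega
  | right a _ ih => simp only [List.length_cons, ih]; omega

end IsShuffle

theorem exists_isShuffle_sublist_of_disjoint {α : Type*} {t v x : List α} (ht : t.Sublist x)
    (hv : v.Sublist x) (hd : t.Disjoint v) : ∃ u, IsShuffle t v u ∧ u.Sublist x := by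
  induction x generalizing t v with
  | nil =>
    obtain rfl := List.sublist_nil.mp ht
    obtain rfl := List.sublist_nil.mp hv
    exact ⟨[], .nil, .slnil⟩
  | cons a x ih =>
    cases ht with
    | cons _ ht =>
      cases hv with
      | cons _ hv =>
        obtain ⟨u, hu, hux⟩ := ih ht hv hd
        exact ⟨u, hu, hux.cons a⟩
      | cons_cons _ hv =>
        obtain ⟨u, hu, hux⟩ := ih ht hv fun _ hb hb' => hd hb (List.mem_cons_of_mem a hb')
        exact ⟨a :: u, .right a hu, hux.cons_cons a⟩
    | cons_cons _ ht =>
      cases hv with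
      | cons _ hv =>
        obtain ⟨u, hu, hux⟩ := ih ht hv fun _ hb hb' => hd (List.mem_cons_of_mem a hb) hb'
        exact ⟨a :: u, .left a hu, hux.cons_cons a⟩
      | cons_cons _ hv => exact absurd List.mem_cons_self (hd List.mem_cons_self)

section CutShuffle

variable {α : Type*} {V u x : List α}

theorem mem_ucl_singleton : x ∈ ucl {V} ↔ V.Sublist x := by
  simp [ucl]

theorem length_eq_of_mem_CS (h : u ∈ CS V) : u.length = V.length := by
  obtain ⟨t, v, rfl, hs⟩ := h
  rw [hs.length_eq, List.length_append]

theorem sublist_append_self_of_mem_CS (h : u ∈ CS V) : V.Sublist (u ++ u) := by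
  obtain ⟨t, v, rfl, hs⟩ := h
  exact hs.sublist_left.append hs.sublist_right

theorem exists_mem_CS_sublist_of_sublist_append_self (hV : V.Nodup)
    (h : V.Sublist (x ++ x)) : ∃ u ∈ CS V, u.Sublist x := by
  obtain ⟨t, v, rfl, ht, hv⟩ := List.sublist_append_iff.mp h
  have hd : t.Disjoint v := fun a ha hb => (List.nodup_append.mp hV).2.2 a ha a hb rfl
  obtain ⟨u, hu, hux⟩ := exists_isShuffle_sublist_of_disjoint ht hv hd
  exact ⟨u, ⟨t, v, rfl, hu⟩, hux⟩

end CutShuffle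

theorem cut_shuffle_sqrt {α : Type*} (V : List α) (hV : V.Nodup) :
    (∀ u : List α, u.length = V.length →
      ((u ++ u) ∈ ucl {V} ↔ u ∈ CS V)) ∧
    ucl (CS V) = {x : List α | (x ++ x) ∈ ucl {V}} := by
  simp only [mem_ucl_singleton]
  refine ⟨fun u hu => ⟨fun h => ?_, sublist_append_self_of_mem_CS⟩, Set.ext fun x => ⟨?_, ?_⟩⟩
  · obtain ⟨w, hw, hwu⟩ := exists_mem_CS_sublist_of_sublist_append_self hV h
    rwa [← hwu.eq_of_length (by rw [length_eq_of_mem_CS hw, hu])]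
  · rintro ⟨u, hu, hux⟩
    exact (sublist_append_self_of_mem_CS hu).trans (hux.append hux)
  · exact exists_mem_CS_sublist_of_sublist_append_self hV
end
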